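/- arXiv:2405.13160 — 2 statements merged into one kernel-verified Lean document; each statement's English description precedes it below -/
import Mathlib

section
/- Under the assumptions of Lemma 6.1 (h bounded in [0,K], φ ∈ C² with F_φ = sup φ', S_φ = sup φ''), the uniform distance sup_θ |V(θ) − φ(R_{p⋆}(θ))|, where V(θ) = ∫ φ(R_p(θ)) Q(dp) and Q has mean measure (N_s/(α_s+N_s)) p_s_emp + (α_s/(α_s+N_s)) q for a measure q, is bounded by (N_s/(α_s+N_s)) F_φ sup_θ |R_{p_s_emp}(θ) − R_{p⋆}(θ)| + (α_s/(α_s+N_s)) F_φ sup_θ |R_q(θ) − R_{p⋆}(θ)| + (K²/2) S_φ. -/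
/-! Write `R_μ = ∫ h θ dμ ∈ [0, K]` and `a = R_{p⋆}`. Expanding `φ` to second order around `a`,
the Taylor remainder is at most `Sφ (R_μ - a)² / 2 ≤ Sφ K² / 2` for `Q`-almost every `μ`,
while the integral of the linear term only sees `∫ R_μ Q(dμ)`, which is `R` of the mean measure
`Q.join = c₁ p_emp + c₂ q`. As `c₁ + c₂ = 1`, this gives
`∫ R_μ Q(dμ) - a = c₁ (R_emp - a) + c₂ (R_q - a)`, and `|φ' a| ≤ Fφ` bounds the linear term. -/

open MeasureTheory Set

section MeanValue

variable {f f' f'' : ℝ → ℝ} {l u : ℝ}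

theorem abs_sub_le_mul_abs_sub_of_hasDerivWithinAt_Icc {C : ℝ}
    (hf : ∀ t ∈ Icc l u, HasDerivWithinAt f (f' t) (Icc l u) t)
    (hC : ∀ t ∈ Ioo l u, |f' t| ≤ C) {x y : ℝ} (hx : x ∈ Icc l u) (hy : y ∈ Icc l u) :
    |f y - f x| ≤ C * |y - x| := by
  wlog hxy : x < y generalizing x y
  · rcases (not_lt.1 hxy).eq_or_lt with rfl | hyx
    · simp
    · rw [abs_sub_comm, abs_sub_comm y]
      exact this hy hx hyx
  have hsub : Icc x y ⊆ Icc l u := Icc_subset_Icc hx.1 hy.2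
  obtain ⟨c, hc, hslope⟩ := exists_hasDerivAt_eq_slope f f' hxy
    (fun t ht => (hf t (hsub ht)).continuousWithinAt.mono hsub)
    (fun t ht => (hf t (hsub (Ioo_subset_Icc_self ht))).hasDerivAt
      (Icc_mem_nhds (hx.1.trans_lt ht.1) (ht.2.trans_le hy.2)))
  rw [eq_div_iff (sub_ne_zero.2 hxy.ne')] at hslope
  rw [← hslope, abs_mul]
  exact mul_le_mul_of_nonneg_right (hC c ⟨hx.1.trans_lt hc.1, hc.2.trans_le hy.2⟩) (abs_nonneg _)

theorem abs_le_of_mem_Icc_of_forall_mem_Ioo {C : ℝ} (hlu : l < u) (hf : ContinuousOn f (Icc l u))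
    (hC : ∀ t ∈ Ioo l u, |f t| ≤ C) {t : ℝ} (ht : t ∈ Icc l u) : |f t| ≤ C := by
  rw [← closure_Ioo hlu.ne] at hf ht
  exact le_on_closure hC hf.abs continuousOn_const ht

theorem abs_sub_sub_mul_le_of_abs_deriv2_le {S : ℝ}
    (hf : ∀ t ∈ Icc l u, HasDerivWithinAt f (f' t) (Icc l u) t)
    (hf' : ∀ t ∈ Icc l u, HasDerivWithinAt f' (f'' t) (Icc l u) t)
    (hS : ∀ t ∈ Ioo l u, |f'' t| ≤ S) {a b : ℝ} (ha : a ∈ Icc l u) (hb : b ∈ Icc l u) :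
    |f b - f a - f' a * (b - a)| ≤ S / 2 * (b - a) ^ 2 := by
  -- Cauchy's mean value theorem for `t ↦ f t - f' a * t` against `t ↦ (t - a) ^ 2`
  have cauchy : ∀ x ∈ Icc l u, ∀ y ∈ Icc l u, x < y → ∃ c ∈ Ioo x y,
      ((y - a) ^ 2 - (x - a) ^ 2) * (f' c - f' a)
        = (f y - f' a * y - (f x - f' a * x)) * (2 * (c - a)) := by
    intro x hx y hy hxy
    have hsub : Icc x y ⊆ Icc l u := Icc_subset_Icc hx.1 hy.2
    refine exists_ratio_hasDerivAt_eq_ratio_slope (fun t => f t - f' a * t) (fun t => f' t - f' a)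
      hxy (fun t ht => ((hf t (hsub ht)).continuousWithinAt.mono hsub).sub (by fun_prop))
      (fun t ht => ?_) (fun t => (t - a) ^ 2) (fun t => 2 * (t - a)) (by fun_prop)
      (fun t _ => by simpa using ((hasDerivAt_id' t).sub_const a).fun_pow 2)
    have := (hf t (hsub (Ioo_subset_Icc_self ht))).hasDerivAt
      (Icc_mem_nhds (hx.1.trans_lt ht.1) (ht.2.trans_le hy.2))
    simpa using this.fun_sub ((hasDerivAt_id' t).const_mul (f' a))
  rcases eq_or_ne a b with rfl | hab
  · simp
  obtain ⟨c, hca, hc, hcauchy⟩ : ∃ c, c ≠ a ∧ c ∈ Icc l u ∧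
      (b - a) ^ 2 * (f' c - f' a) = (f b - f a - f' a * (b - a)) * (2 * (c - a)) := by
    rcases lt_or_gt_of_ne hab with hab | hab
    · obtain ⟨c, hc, h⟩ := cauchy a ha b hb hab
      exact ⟨c, hc.1.ne', Icc_subset_Icc ha.1 hb.2 (Ioo_subset_Icc_self hc),
        by linear_combination h⟩
    · obtain ⟨c, hc, h⟩ := cauchy b hb a ha hab
      exact ⟨c, hc.2.ne, Icc_subset_Icc hb.1 ha.2 (Ioo_subset_Icc_self hc),
        by linear_combination -h⟩
  have hlip := abs_sub_le_mul_abs_sub_of_hasDerivWithinAt_Icc hf' hS ha hc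
  have hpos : 0 < 2 * |c - a| := by positivity [sub_ne_zero.2 hca]
  refine le_of_mul_le_mul_right ?_ hpos
  calc |f b - f a - f' a * (b - a)| * (2 * |c - a|) = (b - a) ^ 2 * |f' c - f' a| := by
        rw [← abs_two, ← abs_mul, ← abs_mul, ← hcauchy, abs_mul, abs_sq]
    _ ≤ (b - a) ^ 2 * (S * |c - a|) := by gcongr
    _ = S / 2 * (b - a) ^ 2 * (2 * |c - a|) := by ring

end MeanValue

section ProbabilitySpace

variable {X : Type*} [MeasurableSpace X] {μ : Measure X} [IsProbabilityMeasure μ]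

theorem integral_mem_Icc_of_forall_mem_Icc {g : X → ℝ} (hg : AEStronglyMeasurable g μ) {l u : ℝ}
    (hgu : ∀ x, g x ∈ Icc l u) : ∫ x, g x ∂μ ∈ Icc l u :=
  (convex_Icc l u).integral_mem isClosed_Icc (.of_forall hgu)
    (.of_bound hg (max |l| |u|) (.of_forall fun x => abs_le_max_abs_abs (hgu x).1 (hgu x).2))

theorem abs_integral_comp_sub_le {f : ℝ → ℝ} {s : Set ℝ} (hs : MeasurableSet s)
    (hf : ContinuousOn f s) {Y : X → ℝ} (hY : Integrable Y μ)
    (hYs : ∀ᵐ x ∂μ, Y x ∈ s) {a c M : ℝ} (hM : ∀ y ∈ s, |f y - f a - c * (y - a)| ≤ M) :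
    |∫ x, f (Y x) ∂μ - f a - c * (∫ x, Y x ∂μ - a)| ≤ M := by
  classical
  have hfY : AEStronglyMeasurable (fun x => f (Y x)) μ :=
    ((hf.measurable_piecewise (continuousOn_const (c := 0)) hs).comp_aemeasurable
      hY.aemeasurable).aestronglyMeasurable.congr
      (hYs.mono fun x hx => piecewise_eq_of_mem _ _ _ hx)
  have hlin : Integrable (fun x => f a + c * (Y x - a)) μ := by fun_prop
  have hr : Integrable (fun x => f (Y x) - f a - c * (Y x - a)) μ :=
    .of_bound ((hfY.sub aestronglyMeasurable_const).sub
      ((hY.sub (integrable_const a)).const_mul c).aestronglyMeasurable) M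
      (hYs.mono fun x hx => hM _ hx)
  have hsplit : ∫ x, f (Y x) ∂μ
      = ∫ x, (f (Y x) - f a - c * (Y x - a)) ∂μ + (f a + c * (∫ x, Y x ∂μ - a)) := by
    have hlinInt : ∫ x, (f a + c * (Y x - a)) ∂μ = f a + c * (∫ x, Y x ∂μ - a) := by
      rw [integral_add (integrable_const _) (by fun_prop),
        integral_const_mul, integral_sub hY (integrable_const a)]
      simp
    rw [← hlinInt, ← integral_add hr hlin]
    congr 1 with x
    ring
  calc |∫ x, f (Y x) ∂μ - f a - c * (∫ x, Y x ∂μ - a)|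
      = ‖∫ x, (f (Y x) - f a - c * (Y x - a)) ∂μ‖ := by rw [hsplit, Real.norm_eq_abs]; congr 1; ring
    _ ≤ M := by
      simpa using norm_integral_le_of_norm_le_const
        (f := fun x => f (Y x) - f a - c * (Y x - a)) (hYs.mono fun x hx => hM _ hx)

end ProbabilitySpace

section Mixture

variable {α : Type*} [MeasurableSpace α]

theorem measurable_integral_of_nonneg {f : α → ℝ} (hf : Measurable f) (hf0 : 0 ≤ f) :
    Measurable fun μ : Measure α => ∫ x, f x ∂μ := by
  simp_rw [integral_eq_lintegral_of_nonneg_ae (.of_forall hf0) hf.aestronglyMeasurable]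
  exact (Measure.measurable_lintegral hf.ennreal_ofReal).ennreal_toReal

theorem integral_integral_eq_integral_join {m : Measure (Measure α)} {f : α → ℝ}
    (hf : Measurable f) (hf0 : 0 ≤ f) (hfi : Integrable f m.join) :
    ∫ μ, ∫ x, f x ∂μ ∂m = ∫ x, f x ∂m.join := by
  simp_rw [integral_eq_lintegral_of_nonneg_ae (.of_forall hf0) hf.aestronglyMeasurable]
  have hfin := hfi.lintegral_lt_top
  rw [Measure.lintegral_join hf.ennreal_ofReal.aemeasurable] at hfin ⊢
  have hmeas := Measure.measurable_lintegral (f := fun x => ENNReal.ofReal (f x)) hf.ennreal_ofReal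
  exact integral_toReal hmeas.aemeasurable (ae_lt_top hmeas hfin.ne)

theorem join_eq_of_integral_toReal_apply {m : Measure (Measure α)} [IsFiniteMeasure m]
    (hm : ∀ᵐ μ ∂m, IsProbabilityMeasure μ) {c₁ c₂ : ℝ} (hc₁ : 0 ≤ c₁) (hc₂ : 0 ≤ c₂)
    {μ₁ μ₂ : Measure α} [IsFiniteMeasure μ₁] [IsFiniteMeasure μ₂]
    (h : ∀ A, MeasurableSet A →
      ∫ μ, (μ A).toReal ∂m = c₁ * (μ₁ A).toReal + c₂ * (μ₂ A).toReal) :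
    m.join = ENNReal.ofReal c₁ • μ₁ + ENNReal.ofReal c₂ • μ₂ := by
  ext A hA
  have hle : ∀ᵐ μ ∂m, μ A ≤ 1 := hm.mono fun μ _ => prob_le_one
  have hfin : ∫⁻ μ, μ A ∂m ≠ ⊤ := by
    refine ne_top_of_le_ne_top (measure_ne_top m univ) ?_
    simpa using lintegral_mono_ae hle
  have hA' := h A hA
  rw [integral_toReal (Measure.measurable_coe hA).aemeasurable
    (hle.mono fun μ hμ => hμ.trans_lt ENNReal.one_lt_top)] at hA'
  rw [Measure.join_apply hA, ← ENNReal.ofReal_toReal hfin, hA', Measure.add_apply,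
    Measure.smul_apply, Measure.smul_apply, smul_eq_mul, smul_eq_mul,
    ENNReal.ofReal_add (by positivity) (by positivity), ENNReal.ofReal_mul hc₁,
    ENNReal.ofReal_mul hc₂, ENNReal.ofReal_toReal (measure_ne_top _ _),
    ENNReal.ofReal_toReal (measure_ne_top _ _)]

theorem integral_integral_eq_of_join_eq {m : Measure (Measure α)} {c₁ c₂ : ℝ}
    (hc₁ : 0 ≤ c₁) (hc₂ : 0 ≤ c₂) {μ₁ μ₂ : Measure α} [IsFiniteMeasure μ₁] [IsFiniteMeasure μ₂]
    (hm : m.join = ENNReal.ofReal c₁ • μ₁ + ENNReal.ofReal c₂ • μ₂)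
    {f : α → ℝ} (hf : Measurable f) (hf0 : 0 ≤ f) {C : ℝ} (hfC : ∀ x, f x ≤ C) :
    ∫ μ, ∫ x, f x ∂μ ∂m = c₁ * ∫ x, f x ∂μ₁ + c₂ * ∫ x, f x ∂μ₂ := by
  have hbdd : ∀ x, ‖f x‖ ≤ C := fun x => by
    rw [Real.norm_of_nonneg (hf0 x)]; exact hfC x
  have hi : ∀ (μ : Measure α) [IsFiniteMeasure μ], ∀ c : ℝ,
      Integrable f (ENNReal.ofReal c • μ) := fun μ _ c =>
    (Integrable.of_bound hf.aestronglyMeasurable C (.of_forall hbdd)).smul_measure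
      ENNReal.ofReal_ne_top
  rw [integral_integral_eq_integral_join hf hf0 (hm ▸ (hi μ₁ c₁).add_measure (hi μ₂ c₂)), hm,
    integral_add_measure (hi μ₁ c₁) (hi μ₂ c₂), integral_smul_measure, integral_smul_measure,
    ENNReal.toReal_ofReal hc₁, ENNReal.toReal_ofReal hc₂, smul_eq_mul, smul_eq_mul]

end Mixture

theorem abs_integral_comp_integral_sub_le {Ξ : Type*} [MeasurableSpace Ξ] {K F S : ℝ}
    {φ φ' φ'' : ℝ → ℝ} (hK : 0 < K)
    (hd1 : ∀ t ∈ Icc 0 K, HasDerivWithinAt φ (φ' t) (Icc 0 K) t)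
    (hd2 : ∀ t ∈ Icc 0 K, HasDerivWithinAt φ' (φ'' t) (Icc 0 K) t)
    (hF : ∀ t ∈ Ioo 0 K, |φ' t| ≤ F) (hS : ∀ t ∈ Ioo 0 K, |φ'' t| ≤ S)
    {g : Ξ → ℝ} (hg : Measurable g) (hgK : ∀ ξ, g ξ ∈ Icc 0 K)
    {Q : Measure (Measure Ξ)} [IsProbabilityMeasure Q] (hQ : ∀ᵐ p ∂Q, IsProbabilityMeasure p)
    {c₁ c₂ : ℝ} (hc₁ : 0 ≤ c₁) (hc₂ : 0 ≤ c₂) (hc : c₁ + c₂ = 1)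
    {p₁ p₂ p : Measure Ξ} [IsProbabilityMeasure p₁] [IsProbabilityMeasure p₂]
    [IsProbabilityMeasure p]
    (hjoin : Q.join = ENNReal.ofReal c₁ • p₁ + ENNReal.ofReal c₂ • p₂) :
    |∫ μ, φ (∫ ξ, g ξ ∂μ) ∂Q - φ (∫ ξ, g ξ ∂p)|
      ≤ c₁ * F * |∫ ξ, g ξ ∂p₁ - ∫ ξ, g ξ ∂p| + c₂ * F * |∫ ξ, g ξ ∂p₂ - ∫ ξ, g ξ ∂p|
        + K ^ 2 / 2 * S := by
  set R : Measure Ξ → ℝ := fun μ => ∫ ξ, g ξ ∂μ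
  have hR : ∀ (μ : Measure Ξ) [IsProbabilityMeasure μ], R μ ∈ Icc 0 K := fun μ _ =>
    integral_mem_Icc_of_forall_mem_Icc hg.aestronglyMeasurable hgK
  set a := R p
  have ha : a ∈ Icc 0 K := hR p
  have hS0 : 0 ≤ S := (abs_nonneg _).trans (hS (K / 2) ⟨by linarith, by linarith⟩)
  have hTaylor : ∀ b ∈ Icc 0 K, |φ b - φ a - φ' a * (b - a)| ≤ K ^ 2 / 2 * S := by
    intro b hb
    have hsq : (b - a) ^ 2 ≤ K ^ 2 :=
      sq_le_sq' (by linarith [hb.1, ha.2]) (by linarith [hb.2, ha.1])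
    refine (abs_sub_sub_mul_le_of_abs_deriv2_le hd1 hd2 hS ha hb).trans ?_
    nlinarith [mul_le_mul_of_nonneg_left hsq hS0]
  have hRQ : Integrable R Q :=
    .of_bound (measurable_integral_of_nonneg hg fun ξ => (hgK ξ).1).aestronglyMeasurable K
      (hQ.mono fun μ _ => by rw [Real.norm_of_nonneg (hR μ).1]; exact (hR μ).2)
  have hrem := abs_integral_comp_sub_le measurableSet_Icc
    (fun t ht => (hd1 t ht).continuousWithinAt) hRQ (hQ.mono fun μ _ => hR μ) hTaylor
  have hmean : ∫ μ, R μ ∂Q - a = c₁ * (R p₁ - a) + c₂ * (R p₂ - a) := by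
    rw [integral_integral_eq_of_join_eq hc₁ hc₂ hjoin hg (fun ξ => (hgK ξ).1)
      (fun ξ => (hgK ξ).2)]
    linear_combination a * hc
  have hφ'a : |φ' a| ≤ F :=
    abs_le_of_mem_Icc_of_forall_mem_Ioo hK (fun t ht => (hd2 t ht).continuousWithinAt) hF ha
  have hlin : |∫ μ, R μ ∂Q - a| ≤ c₁ * |R p₁ - a| + c₂ * |R p₂ - a| := by
    rw [hmean]
    refine (abs_add_le _ _).trans_eq ?_
    rw [abs_mul, abs_mul, abs_of_nonneg hc₁, abs_of_nonneg hc₂]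
  calc |∫ μ, φ (R μ) ∂Q - φ a|
      = |(∫ μ, φ (R μ) ∂Q - φ a - φ' a * (∫ μ, R μ ∂Q - a)) + φ' a * (∫ μ, R μ ∂Q - a)| := by
        congr 1; ring
    _ ≤ K ^ 2 / 2 * S + F * (c₁ * |R p₁ - a| + c₂ * |R p₂ - a|) := by
        refine (abs_add_le _ _).trans (add_le_add hrem ?_)
        rw [abs_mul]
        exact mul_le_mul hφ'a hlin (abs_nonneg _) ((abs_nonneg _).trans hφ'a)
    _ = c₁ * F * |R p₁ - a| + c₂ * F * |R p₂ - a| + K ^ 2 / 2 * S := by ring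

/-- Lemma 6.1: with `h` bounded in `[0,K]`, `φ ∈ C²` with `sup|φ'| ≤ Fφ`, `sup|φ''| ≤ Sφ`,
and `Q` a posterior over probability measures with mean measure
`(N_s/(α_s+N_s)) p_emp + (α_s/(α_s+N_s)) q`, the uniform distance between the smooth
criterion `V(θ) = ∫ φ(R_p(θ)) Q(dp)` and `φ(R_{p⋆}(θ))` is bounded by
`(N_s/(α_s+N_s)) Fφ sup_θ|R_emp − R⋆| + (α_s/(α_s+N_s)) Fφ sup_θ|R_q − R⋆| + (K²/2) Sφ`. -/
theorem stmt_4 {Θ Ξ : Type*} [Nonempty Θ] [MeasurableSpace Ξ]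
    (K : ℝ) (hK : 0 < K)
    (φ φ' φ'' : ℝ → ℝ) (Fφ Sφ : ℝ)
    (hd1 : ∀ t ∈ Set.Icc (0:ℝ) K, HasDerivWithinAt φ (φ' t) (Set.Icc 0 K) t)
    (hd2 : ∀ t ∈ Set.Icc (0:ℝ) K, HasDerivWithinAt φ' (φ'' t) (Set.Icc 0 K) t)
    (hF : ∀ t ∈ Set.Ioo (0:ℝ) K, |φ' t| ≤ Fφ)
    (hS : ∀ t ∈ Set.Ioo (0:ℝ) K, |φ'' t| ≤ Sφ)
    (h : Θ → Ξ → ℝ) (hmeas : ∀ θ, Measurable (h θ))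
    (hbd : ∀ θ ξ, h θ ξ ∈ Set.Icc 0 K)
    (Ns : ℕ) (αs : ℝ) (hαs : 0 < αs)
    (Q : Measure (Measure Ξ)) [IsProbabilityMeasure Q]
    (hQprob : ∀ᵐ p ∂Q, IsProbabilityMeasure p)
    (psemp q pstar : Measure Ξ)
    [IsProbabilityMeasure psemp] [IsProbabilityMeasure q] [IsProbabilityMeasure pstar]
    (hmean : ∀ A : Set Ξ, MeasurableSet A →
      ∫ p, (p A).toReal ∂Q
        = (Ns / (αs + Ns)) * (psemp A).toReal + (αs / (αs + Ns)) * (q A).toReal) :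
    (⨆ θ : Θ, |(∫ p, φ (∫ ξ, h θ ξ ∂p) ∂Q) - φ (∫ ξ, h θ ξ ∂pstar)|)
      ≤ (Ns / (αs + Ns)) * Fφ * (⨆ θ : Θ, |(∫ ξ, h θ ξ ∂psemp) - ∫ ξ, h θ ξ ∂pstar|)
        + (αs / (αs + Ns)) * Fφ * (⨆ θ : Θ, |(∫ ξ, h θ ξ ∂q) - ∫ ξ, h θ ξ ∂pstar|)
        + K ^ 2 / 2 * Sφ := by
  have hden : (0 : ℝ) < αs + Ns := by positivity
  have hc : Ns / (αs + Ns) + αs / (αs + Ns) = 1 := by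
    rw [← add_div, add_comm]
    exact div_self hden.ne'
  have hjoin := join_eq_of_integral_toReal_apply hQprob (by positivity) (by positivity) hmean
  have hF0 : 0 ≤ Fφ := (abs_nonneg _).trans (hF (K / 2) ⟨by linarith, by linarith⟩)
  have hbdd : ∀ (p : Measure Ξ) [IsProbabilityMeasure p],
      BddAbove (range fun θ => |∫ ξ, h θ ξ ∂p - ∫ ξ, h θ ξ ∂pstar|) := by
    refine fun p _ => ⟨K, ?_⟩
    rintro _ ⟨θ, rfl⟩
    have h₁ := integral_mem_Icc_of_forall_mem_Icc (μ := p) (hmeas θ).aestronglyMeasurable (hbd θ)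
    have h₂ := integral_mem_Icc_of_forall_mem_Icc (μ := pstar) (hmeas θ).aestronglyMeasurable (hbd θ)
    exact abs_sub_le_iff.2 ⟨by linarith [h₁.2, h₂.1], by linarith [h₁.1, h₂.2]⟩
  refine ciSup_le fun θ => (abs_integral_comp_integral_sub_le hK hd1 hd2 hF hS (hmeas θ) (hbd θ)
    hQprob (by positivity) (by positivity) hc hjoin).trans ?_
  gcongr
  · exact le_ciSup (hbdd psemp) θ
  · exact le_ciSup (hbdd q) θ
end

section
/- Let p be a random probability measure with stick-breaking representation p = ∑_{j≥1} p_j δ_{ξ_j}, weights p_j as above from i.i.d. Beta(1, α+n) variables, and let h(θ,·) ∈ [0,K], φ differentiable with sup |φ'| = M_φ < ∞. Then for each θ, |E[φ(∑_{j=1}^T p_j h(θ,ξ_j) + p_0 h(θ,ξ_0))] − E[φ(∑_{j=1}^∞ p_j h(θ,ξ_j))]| ≤ M_φ K ((α+n)/(α+n+1))^T, where p_0 = ∏_{k=1}^T (1−B_k) and ξ_0 is a fresh draw from the centering measure. -/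
/-!
Let `R_T = ∏_{k<T} (1 - B_k)` be the stick left after `T` breaks. The weights telescope,
`p_j = R_j - R_{j+1}`, so both the discarded tail `∑_{j ≥ T} p_j h(θ, ξ_j)` and its
replacement `R_T h(θ, ξ₀)` lie in `[0, K R_T]`. The two arguments of `φ` therefore differ by
at most `K R_T`, and the Lipschitz bound gives `M_φ K E[R_T]`. By independence
`E[R_T] = (E[1 - B])^T`, and `E[1 - B] = a / (a + 1)` for `B ~ Beta(1, a)`.
-/

open MeasureTheory

/-- The Beta(1, a) distribution on `[0,1]`, with density `a(1−x)^{a−1}`. -/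
noncomputable def betaOneMeasure (a : ℝ) : Measure ℝ :=
  (volume.restrict (Set.Icc (0:ℝ) 1)).withDensity
    fun x => ENNReal.ofReal (a * (1 - x) ^ (a - 1))

open Finset ProbabilityTheory

def stickWeight (b : ℕ → ℝ) (j : ℕ) : ℝ := b j * ∏ i ∈ range j, (1 - b i)

def stickRemainder (b : ℕ → ℝ) (m : ℕ) : ℝ := ∏ k ∈ range m, (1 - b k)

section StickBreaking

@[simp] lemma stickRemainder_zero (b : ℕ → ℝ) : stickRemainder b 0 = 1 := prod_range_zero _

lemma stickWeight_eq_sub (b : ℕ → ℝ) (j : ℕ) :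
    stickWeight b j = stickRemainder b j - stickRemainder b (j + 1) := by
  rw [stickWeight, stickRemainder, stickRemainder, prod_range_succ]
  ring

lemma sum_range_stickWeight_add (b : ℕ → ℝ) (T m : ℕ) :
    ∑ j ∈ range m, stickWeight b (j + T) = stickRemainder b T - stickRemainder b (m + T) := by
  have htelescope := sum_range_sub' (fun j => stickRemainder b (j + T)) m
  simp only [add_right_comm _ 1 T, zero_add] at htelescope
  simpa only [stickWeight_eq_sub] using htelescope

variable {b : ℕ → ℝ}

lemma stickRemainder_nonneg (hb : ∀ k, b k ∈ Set.Icc (0 : ℝ) 1) (m : ℕ) :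
    0 ≤ stickRemainder b m :=
  prod_nonneg fun k _ => sub_nonneg.2 (hb k).2

lemma stickRemainder_le_one (hb : ∀ k, b k ∈ Set.Icc (0 : ℝ) 1) (m : ℕ) :
    stickRemainder b m ≤ 1 :=
  prod_le_one (fun k _ => sub_nonneg.2 (hb k).2) fun k _ => sub_le_self _ (hb k).1

lemma stickWeight_nonneg (hb : ∀ k, b k ∈ Set.Icc (0 : ℝ) 1) (j : ℕ) :
    0 ≤ stickWeight b j :=
  mul_nonneg (hb j).1 (stickRemainder_nonneg hb j)

variable {v : ℕ → ℝ} {K : ℝ}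

lemma stickWeight_mul_nonneg (hb : ∀ k, b k ∈ Set.Icc (0 : ℝ) 1)
    (hv : ∀ j, v j ∈ Set.Icc 0 K) (j : ℕ) :
    0 ≤ stickWeight b j * v j :=
  mul_nonneg (stickWeight_nonneg hb j) (hv j).1

lemma sum_range_stickWeight_add_mul_le (hb : ∀ k, b k ∈ Set.Icc (0 : ℝ) 1)
    (hv : ∀ j, v j ∈ Set.Icc 0 K) (T m : ℕ) :
    ∑ j ∈ range m, stickWeight b (j + T) * v (j + T)
      ≤ K * (stickRemainder b T - stickRemainder b (m + T)) := by
  rw [← sum_range_stickWeight_add, mul_sum]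
  exact sum_le_sum fun j _ =>
    (mul_le_mul_of_nonneg_left (hv _).2 (stickWeight_nonneg hb _)).trans_eq (mul_comm _ _)

lemma summable_stickWeight_mul (hb : ∀ k, b k ∈ Set.Icc (0 : ℝ) 1)
    (hv : ∀ j, v j ∈ Set.Icc 0 K) :
    Summable fun j => stickWeight b j * v j :=
  summable_of_sum_range_le (c := K) (stickWeight_mul_nonneg hb hv) fun m => by
    simpa using (sum_range_stickWeight_add_mul_le hb hv 0 m).trans <|
      mul_le_of_le_one_right ((hv 0).1.trans (hv 0).2) (sub_le_self _ (stickRemainder_nonneg hb _))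

lemma tsum_stickWeight_add_mul_mem_Icc (hb : ∀ k, b k ∈ Set.Icc (0 : ℝ) 1)
    (hv : ∀ j, v j ∈ Set.Icc 0 K) (T : ℕ) :
    ∑' j, stickWeight b (j + T) * v (j + T) ∈ Set.Icc 0 (K * stickRemainder b T) :=
  ⟨tsum_nonneg fun _ => stickWeight_mul_nonneg hb hv _,
    ((summable_nat_add_iff T).2 (summable_stickWeight_mul hb hv)).tsum_le_of_sum_range_le fun m =>
      (sum_range_stickWeight_add_mul_le hb hv T m).trans <| mul_le_mul_of_nonneg_left
        (sub_le_self _ (stickRemainder_nonneg hb _)) ((hv 0).1.trans (hv 0).2)⟩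

lemma tsum_stickWeight_mul_mem_Icc (hb : ∀ k, b k ∈ Set.Icc (0 : ℝ) 1)
    (hv : ∀ j, v j ∈ Set.Icc 0 K) :
    ∑' j, stickWeight b j * v j ∈ Set.Icc 0 K := by
  simpa using tsum_stickWeight_add_mul_mem_Icc hb hv 0

variable {v₀ : ℝ}

lemma sum_range_stickWeight_mul_add_mem_Icc (hb : ∀ k, b k ∈ Set.Icc (0 : ℝ) 1)
    (hv : ∀ j, v j ∈ Set.Icc 0 K) (hv₀ : v₀ ∈ Set.Icc 0 K) (T : ℕ) :
    ∑ j ∈ range T, stickWeight b j * v j + stickRemainder b T * v₀ ∈ Set.Icc 0 K := by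
  have hsum : ∑ j ∈ range T, stickWeight b j * v j ≤ K * (1 - stickRemainder b T) := by
    simpa using sum_range_stickWeight_add_mul_le hb hv 0 T
  have hrem := mul_le_mul_of_nonneg_left hv₀.2 (stickRemainder_nonneg hb T)
  constructor
  · exact add_nonneg (sum_nonneg fun j _ => stickWeight_mul_nonneg hb hv j)
      (mul_nonneg (stickRemainder_nonneg hb T) hv₀.1)
  · linarith

lemma abs_sum_range_stickWeight_mul_add_sub_tsum_le (hb : ∀ k, b k ∈ Set.Icc (0 : ℝ) 1)
    (hv : ∀ j, v j ∈ Set.Icc 0 K) (hv₀ : v₀ ∈ Set.Icc 0 K) (T : ℕ) :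
    |∑ j ∈ range T, stickWeight b j * v j + stickRemainder b T * v₀
      - ∑' j, stickWeight b j * v j| ≤ K * stickRemainder b T := by
  rw [← (summable_stickWeight_mul hb hv).sum_add_tsum_nat_add T, add_sub_add_left_eq_sub]
  have htail := tsum_stickWeight_add_mul_mem_Icc hb hv T
  exact abs_sub_le_of_nonneg_of_le (mul_nonneg (stickRemainder_nonneg hb T) hv₀.1)
    ((mul_le_mul_of_nonneg_left hv₀.2 (stickRemainder_nonneg hb T)).trans_eq (mul_comm _ _))
    htail.1 htail.2

end StickBreaking

section Probability

variable {Ω : Type*} [MeasurableSpace Ω] {P : Measure Ω}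

lemma ProbabilityTheory.iIndepFun.integral_prod_range {X : ℕ → Ω → ℝ} (hX : iIndepFun X P)
    (hXm : ∀ k, AEStronglyMeasurable (X k) P) (m : ℕ) :
    ∫ ω, ∏ k ∈ range m, X k ω ∂P = ∏ k ∈ range m, ∫ ω, X k ω ∂P := by
  simp_rw [prod_range]
  exact (hX.precomp Fin.val_injective).integral_fun_prod_eq_prod_integral fun k => hXm k

lemma Continuous.integrable_comp_of_ae_mem_Icc [IsFiniteMeasure P] {φ : ℝ → ℝ}
    (hφ : Continuous φ) {X : Ω → ℝ} (hX : AEStronglyMeasurable X P) {a b : ℝ}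
    (hXab : ∀ᵐ ω ∂P, X ω ∈ Set.Icc a b) : Integrable (fun ω => φ (X ω)) P := by
  obtain ⟨C, hC⟩ := isCompact_Icc.exists_bound_of_continuousOn hφ.continuousOn
  exact .of_bound (hφ.comp_aestronglyMeasurable hX) C (hXab.mono fun ω hω => hC _ hω)

lemma abs_integral_comp_sub_integral_comp_le {φ : ℝ → ℝ} {M : ℝ}
    (hφ : ∀ x y, |φ x - φ y| ≤ M * |x - y|) (hM : 0 ≤ M) {X Y D : Ω → ℝ}
    (hX : Integrable (fun ω => φ (X ω)) P) (hY : Integrable (fun ω => φ (Y ω)) P)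
    (hD : Integrable D P) (hXY : ∀ᵐ ω ∂P, |X ω - Y ω| ≤ D ω) :
    |∫ ω, φ (X ω) ∂P - ∫ ω, φ (Y ω) ∂P| ≤ M * ∫ ω, D ω ∂P := by
  rw [← integral_sub hX hY, ← integral_const_mul]
  refine abs_integral_le_integral_abs.trans <|
    integral_mono_ae (hX.sub hY).abs (hD.const_mul M) ?_
  filter_upwards [hXY] with ω hω
  exact (hφ _ _).trans (mul_le_mul_of_nonneg_left hω hM)

end Probability

lemma ae_mem_Icc_betaOneMeasure (a : ℝ) :
    ∀ᵐ x ∂betaOneMeasure a, x ∈ Set.Icc (0 : ℝ) 1 :=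
  (withDensity_absolutelyContinuous _ _).ae_le (ae_restrict_mem measurableSet_Icc)

lemma integral_one_sub_betaOneMeasure {a : ℝ} (ha : 0 < a) :
    ∫ x, (1 - x) ∂betaOneMeasure a = a / (a + 1) := by
  rw [betaOneMeasure, integral_withDensity_eq_integral_toReal_smul (by fun_prop)
    (Filter.Eventually.of_forall fun _ => ENNReal.ofReal_lt_top)]
  have hdensity : ∀ x ∈ Set.Icc (0 : ℝ) 1,
      (ENNReal.ofReal (a * (1 - x) ^ (a - 1))).toReal • (1 - x) = a * (1 - x) ^ a := by
    intro x hx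
    have h1x : 0 ≤ 1 - x := sub_nonneg.2 hx.2
    rw [ENNReal.toReal_ofReal (by positivity), smul_eq_mul, mul_assoc,
      ← Real.rpow_add_one' h1x (by simpa using ha.ne'), sub_add_cancel]
  rw [setIntegral_congr_fun measurableSet_Icc hdensity, integral_Icc_eq_integral_Ioc,
    ← intervalIntegral.integral_of_le zero_le_one, intervalIntegral.integral_const_mul,
    intervalIntegral.integral_comp_sub_left (fun x => x ^ a), sub_self, sub_zero,
    integral_rpow (Or.inl (by linarith)), Real.one_rpow, Real.zero_rpow (by linarith)]
  field_simp
  ring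

lemma ae_mem_Icc_of_map_eq_betaOneMeasure {Ω : Type*} [MeasurableSpace Ω] {P : Measure Ω}
    {B : Ω → ℝ} (hB : Measurable B) {a : ℝ} (hBlaw : P.map B = betaOneMeasure a) :
    ∀ᵐ ω ∂P, B ω ∈ Set.Icc (0 : ℝ) 1 :=
  ae_of_ae_map hB.aemeasurable (hBlaw ▸ ae_mem_Icc_betaOneMeasure a)

lemma integral_one_sub_of_map_eq_betaOneMeasure {Ω : Type*} [MeasurableSpace Ω] {P : Measure Ω}
    {B : Ω → ℝ} (hB : Measurable B) {a : ℝ} (ha : 0 < a)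
    (hBlaw : P.map B = betaOneMeasure a) :
    ∫ ω, (1 - B ω) ∂P = a / (a + 1) := by
  rw [← integral_one_sub_betaOneMeasure ha, ← hBlaw,
    integral_map hB.aemeasurable (by fun_prop)]

lemma integral_stickRemainder_of_iIndepFun {Ω : Type*} [MeasurableSpace Ω] {P : Measure Ω}
    {B : ℕ → Ω → ℝ} (hB : ∀ k, Measurable (B k)) {a : ℝ} (ha : 0 < a)
    (hBlaw : ∀ k, P.map (B k) = betaOneMeasure a) (hBindep : iIndepFun B P) (T : ℕ) :
    ∫ ω, stickRemainder (B · ω) T ∂P = (a / (a + 1)) ^ T := by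
  have hindep : iIndepFun (fun k ω => 1 - B k ω) P :=
    hBindep.comp (fun _ x => 1 - x) fun _ => measurable_const.sub measurable_id
  calc ∫ ω, ∏ k ∈ range T, (1 - B k ω) ∂P
        = ∏ k ∈ range T, ∫ ω, (1 - B k ω) ∂P :=
        hindep.integral_prod_range (fun k => ((hB k).const_sub 1).aestronglyMeasurable) T
    _ = (a / (a + 1)) ^ T := by
        rw [prod_congr rfl fun k _ => integral_one_sub_of_map_eq_betaOneMeasure (hB k) ha
          (hBlaw k), prod_const, card_range]

theorem stmt_12_general {Θ Ξ Ω : Type*} [MeasurableSpace Ξ] [MeasurableSpace Ω]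
    (P : Measure Ω) [IsProbabilityMeasure P]
    (α : ℝ) (hα : 0 < α) (n : ℕ)
    (B : ℕ → Ω → ℝ) (hBmeas : ∀ k, Measurable (B k))
    (hBlaw : ∀ k, Measure.map (B k) P = betaOneMeasure (α + n))
    (hBindep : ProbabilityTheory.iIndepFun B P)
    (ξa : ℕ → Ω → Ξ) (hξmeas : ∀ j, Measurable (ξa j))
    (ξ0 : Ω → Ξ) (hξ0 : Measurable ξ0)
    (K : ℝ) (h : Θ → Ξ → ℝ) (hmeas : ∀ θ, Measurable (h θ))
    (hbd : ∀ θ ξ, h θ ξ ∈ Set.Icc 0 K)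
    (φ : ℝ → ℝ) (Mφ : ℝ) (hMφ : 0 ≤ Mφ)
    (hφ : ∀ a b : ℝ, |φ a - φ b| ≤ Mφ * |a - b|)
    (T : ℕ) (θ : Θ) :
    |(∫ ω, φ ((∑ j ∈ Finset.range T,
            (B j ω * ∏ i ∈ Finset.range j, (1 - B i ω)) * h θ (ξa j ω))
          + (∏ k ∈ Finset.range T, (1 - B k ω)) * h θ (ξ0 ω)) ∂P)
        - ∫ ω, φ (∑' j : ℕ,
            (B j ω * ∏ i ∈ Finset.range j, (1 - B i ω)) * h θ (ξa j ω)) ∂P|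
      ≤ Mφ * K * ((α + n) / (α + n + 1)) ^ T := by
  have hφc : Continuous φ := (LipschitzWith.of_dist_le_mul (K := Mφ.toNNReal) fun x y => by
    simpa only [Real.dist_eq, Real.coe_toNNReal _ hMφ] using hφ x y).continuous
  have hsticks : ∀ᵐ ω ∂P, ∀ k, B k ω ∈ Set.Icc (0 : ℝ) 1 :=
    ae_all_iff.2 fun k => ae_mem_Icc_of_map_eq_betaOneMeasure (hBmeas k) (hBlaw k)
  set R : Ω → ℝ := fun ω => stickRemainder (B · ω) T
  set X : Ω → ℝ := fun ω =>
    ∑ j ∈ range T, stickWeight (B · ω) j * h θ (ξa j ω) + R ω * h θ (ξ0 ω)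
  set Y : Ω → ℝ := fun ω => ∑' j, stickWeight (B · ω) j * h θ (ξa j ω)
  change |∫ ω, φ (X ω) ∂P - ∫ ω, φ (Y ω) ∂P| ≤ _
  have hRm : Measurable R := by simp only [R, stickRemainder]; fun_prop
  have hXm : Measurable X := by simp only [X, R, stickWeight, stickRemainder]; fun_prop
  have hYm : Measurable Y := by simp only [Y, stickWeight]; fun_prop
  have hR : ∀ᵐ ω ∂P, R ω ∈ Set.Icc 0 1 := hsticks.mono fun ω hb =>
    ⟨stickRemainder_nonneg hb T, stickRemainder_le_one hb T⟩
  have hX : ∀ᵐ ω ∂P, X ω ∈ Set.Icc 0 K := hsticks.mono fun ω hb =>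
    sum_range_stickWeight_mul_add_mem_Icc hb (fun _ => hbd θ _) (hbd θ _) T
  have hY : ∀ᵐ ω ∂P, Y ω ∈ Set.Icc 0 K := hsticks.mono fun ω hb =>
    tsum_stickWeight_mul_mem_Icc hb fun _ => hbd θ _
  have hXY : ∀ᵐ ω ∂P, |X ω - Y ω| ≤ K * R ω := hsticks.mono fun ω hb =>
    abs_sum_range_stickWeight_mul_add_sub_tsum_le hb (fun _ => hbd θ _) (hbd θ _) T
  calc |∫ ω, φ (X ω) ∂P - ∫ ω, φ (Y ω) ∂P| ≤ Mφ * ∫ ω, K * R ω ∂P :=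
        abs_integral_comp_sub_integral_comp_le hφ hMφ
          (hφc.integrable_comp_of_ae_mem_Icc hXm.aestronglyMeasurable hX)
          (hφc.integrable_comp_of_ae_mem_Icc hYm.aestronglyMeasurable hY)
          ((continuous_id.integrable_comp_of_ae_mem_Icc hRm.aestronglyMeasurable hR).const_mul K)
          hXY
    _ = Mφ * K * ((α + n) / (α + n + 1)) ^ T := by
        rw [integral_const_mul, integral_stickRemainder_of_iIndepFun hBmeas (by positivity) hBlaw
          hBindep T, mul_assoc]

/-- Truncation-bias bound (Lemma A.1, sublemma 1): for the stick-breaking representation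
with i.i.d. `Beta(1, α+n)` sticks, `h(θ,·) ∈ [0,K]` and `φ` `M_φ`-Lipschitz,
`|E[φ(∑_{j<T} p_j h(θ,ξ_j) + p₀ h(θ,ξ₀))] − E[φ(∑_{j=0}^∞ p_j h(θ,ξ_j))]|
  ≤ M_φ K ((α+n)/(α+n+1))^T`, where `p₀ = ∏_{k<T}(1−B_k)`. -/
theorem stmt_12 {Θ Ξ Ω : Type*} [MeasurableSpace Ξ] [MeasurableSpace Ω]
    (P : Measure Ω) [IsProbabilityMeasure P]
    (α : ℝ) (hα : 0 < α) (n : ℕ)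
    (B : ℕ → Ω → ℝ) (hBmeas : ∀ k, Measurable (B k))
    (hBlaw : ∀ k, Measure.map (B k) P = betaOneMeasure (α + n))
    (hBindep : ProbabilityTheory.iIndepFun B P)
    (ξa : ℕ → Ω → Ξ) (hξmeas : ∀ j, Measurable (ξa j))
    (ξ0 : Ω → Ξ) (hξ0 : Measurable ξ0)
    (K : ℝ) (h : Θ → Ξ → ℝ) (hmeas : ∀ θ, Measurable (h θ))
    (hbd : ∀ θ ξ, h θ ξ ∈ Set.Icc 0 K)
    (φ : ℝ → ℝ) (Mφ : ℝ) (hMφ : 0 ≤ Mφ)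
    (hφ : ∀ a b : ℝ, |φ a - φ b| ≤ Mφ * |a - b|)
    (hφmeas : Measurable φ)
    (T : ℕ) (θ : Θ) :
    |(∫ ω, φ ((∑ j ∈ Finset.range T,
            (B j ω * ∏ i ∈ Finset.range j, (1 - B i ω)) * h θ (ξa j ω))
          + (∏ k ∈ Finset.range T, (1 - B k ω)) * h θ (ξ0 ω)) ∂P)
        - ∫ ω, φ (∑' j : ℕ,
            (B j ω * ∏ i ∈ Finset.range j, (1 - B i ω)) * h θ (ξa j ω)) ∂P|
      ≤ Mφ * K * ((α + n) / (α + n + 1)) ^ T :=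
  stmt_12_general P α hα n B hBmeas hBlaw hBindep ξa hξmeas ξ0 hξ0 K h hmeas hbd φ Mφ hMφ hφ T θ
end
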